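/- Assume the Green function G is exponentially almost periodic. If f : ℝ → X is almost periodic, then the function u(t) := ∫_ℝ G(t,s) f(s) ds is almost periodic. -/

import Mathlib

open MeasureTheory Real Filter Bornology

/-- An evolution family on a Banach space `X` together with an exponential dichotomy:
projections `P t`, the inverses `V s t` of the restrictions of `U t s` to the kernels
of the projections (i.e. `V s t = U_Q(s,t)` for `s ≤ t`), dichotomy constants `N, β`
and a bound `H` on the norms of the projections. -/
structure EvolutionDichotomy (X : Type*) [NormedAddCommGroup X] [NormedSpace ℝ X] where
  U : ℝ → ℝ → X →L[ℝ] X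
  P : ℝ → X →L[ℝ] X
  V : ℝ → ℝ → X →L[ℝ] X
  N : ℝ
  β : ℝ
  H : ℝ
  N_pos : 0 < N
  β_pos : 0 < β
  U_id : ∀ s, U s s = ContinuousLinearMap.id ℝ X
  U_comp : ∀ ⦃s r t : ℝ⦄, s ≤ r → r ≤ t → ∀ x, U t r (U r s x) = U t s x
  U_cont : ∀ x : X, ContinuousOn (fun p : ℝ × ℝ => U p.1 p.2 x) {p : ℝ × ℝ | p.2 ≤ p.1}
  P_proj : ∀ t x, P t (P t x) = P t x
  P_cont : ∀ x : X, Continuous fun t => P t x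
  P_bound : ∀ t, ‖P t‖ ≤ H
  comm : ∀ ⦃s t : ℝ⦄, s ≤ t → ∀ x, P t (U t s x) = U t s (P s x)
  V_mapsTo : ∀ ⦃s t : ℝ⦄, s ≤ t → ∀ x, P s (V s t (x - P t x)) = 0
  V_left : ∀ ⦃s t : ℝ⦄, s ≤ t → ∀ x, V s t (U t s (x - P s x)) = x - P s x
  V_right : ∀ ⦃s t : ℝ⦄, s ≤ t → ∀ x, U t s (V s t (x - P t x)) = x - P t x
  P_decay : ∀ ⦃s t : ℝ⦄, s ≤ t → ∀ x, ‖U t s (P s x)‖ ≤ N * Real.exp (-β * (t - s)) * ‖x‖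
  Q_decay : ∀ ⦃s t : ℝ⦄, s ≤ t → ∀ x, ‖V s t (x - P t x)‖ ≤ N * Real.exp (-β * (t - s)) * ‖x‖

namespace EvolutionDichotomy

variable {X : Type*} [NormedAddCommGroup X] [NormedSpace ℝ X]

/-- The complementary projection `Q t = Id - P t`. -/
noncomputable def Q (E : EvolutionDichotomy X) (t : ℝ) : X →L[ℝ] X :=
  ContinuousLinearMap.id ℝ X - E.P t

/-- The Green function of the dichotomy: `G t s = P t ∘ U t s` for `t > s` and
`G t s = -(U_Q(t,s) ∘ Q s)` for `t ≤ s`. -/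
noncomputable def G (E : EvolutionDichotomy X) (t s : ℝ) : X →L[ℝ] X :=
  if s < t then (E.P t).comp (E.U t s) else -((E.V t s).comp (E.Q s))

/-- The Green function is exponentially almost periodic. -/
def ExpAP (E : EvolutionDichotomy X) : Prop :=
  ∀ η > (0:ℝ), ∀ ε > (0:ℝ), ∃ γ > (0:ℝ), ∃ l > (0:ℝ), ∀ a : ℝ,
    ∃ T ∈ Set.Icc a (a + l), ∀ t s : ℝ, η ≤ |t - s| →
      ‖E.G (t + T) (s + T) - E.G t s‖ ≤ ε * Real.exp (-γ * |t - s|)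

end EvolutionDichotomy

/-- A bounded continuous function `f : ℝ → X` is (Bohr) almost periodic if for every `ε > 0`
there is `l > 0` such that every interval of length `l` contains an `ε`-almost period. -/
def AlmostPeriodic {X : Type*} [NormedAddCommGroup X] (f : ℝ → X) : Prop :=
  Continuous f ∧ Bornology.IsBounded (Set.range f) ∧
  ∀ ε > (0:ℝ), ∃ l > (0:ℝ), ∀ a : ℝ, ∃ T ∈ Set.Icc a (a + l),
    ∀ t : ℝ, ‖f (t + T) - f t‖ < ε

/-- A function on `[0,∞)` is asymptotically almost periodic if it is the sum of an almost
periodic function and a continuous function vanishing at infinity. -/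
def AsympAlmostPeriodic {X : Type*} [NormedAddCommGroup X] (g : ℝ → X) : Prop :=
  ∃ h φ : ℝ → X, AlmostPeriodic h ∧ ContinuousOn φ (Set.Ici 0) ∧
    Filter.Tendsto (fun t => ‖φ t‖) Filter.atTop (nhds 0) ∧
    ∀ t : ℝ, 0 ≤ t → g t = h t + φ t

/-- `PAP0`: bounded continuous functions with vanishing mean value. -/
def PAP0 {X : Type*} [NormedAddCommGroup X] (φ : ℝ → X) : Prop :=
  Continuous φ ∧ Bornology.IsBounded (Set.range φ) ∧
  Filter.Tendsto (fun r : ℝ => (1 / (2 * r)) * ∫ t in (-r)..r, ‖φ t‖)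
    Filter.atTop (nhds 0)

/-- A bounded continuous function is pseudo almost periodic if it is the sum of an almost
periodic function and a `PAP0` function. -/
def PseudoAP {X : Type*} [NormedAddCommGroup X] (f : ℝ → X) : Prop :=
  ∃ g φ : ℝ → X, AlmostPeriodic g ∧ PAP0 φ ∧ ∀ t : ℝ, f t = g t + φ t

/-! Write `u(t + T) - u(t) = ∫ G(t+T, s+T)(f(s+T) - f(s)) ds + ∫ (G(t+T, s+T) - G(t, s)) f(s) ds`.
If `T` is a `δ`-almost period of `f` the first integral is `O(δ)` by the exponential decay of `G`.
If moreover `T` is a `δ`-almost period of `G` off the strip `|t - s| < η`, then, with `‖f‖ ≤ C`,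
the integrand of the second integral is bounded by `2NC` on the strip, and off it by both `δC`
and `2NC e^{-β|t-s|}`, hence by their geometric mean `C √(2Nδ) e^{-β|t-s|/2}`; so the second
integral is `O(η + √δ)`. Such common almost periods are relatively dense: differences of almost
periods of `G` are almost periods of `G`, and since the translates of `f` are totally bounded,
among the differences of any relatively dense set there is a relatively dense set of almost
periods of `f`.

Continuity of `u` comes from dominated convergence: `G(t, s) x` is jointly continuous off the
diagonal, by Banach–Steinhaus for `U` and because `U(r, t)` is bounded below on `ker P(t)`. -/

open Set Topology
open scoped Pointwise

section BoundedFamilies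

variable {𝕜 E F : Type*} [NontriviallyNormedField 𝕜] [NormedAddCommGroup E] [NormedSpace 𝕜 E]
  [NormedAddCommGroup F] [NormedSpace 𝕜 F]

theorem Filter.Tendsto.clm_apply_of_eventually_norm_le {α : Type*} {l : Filter α}
    {A : α → E →L[𝕜] F} {B : E →L[𝕜] F} {y : α → E} {y₀ : E} {K : ℝ}
    (hA : ∀ x, Tendsto (fun a => A a x) l (𝓝 (B x))) (hK : ∀ᶠ a in l, ‖A a‖ ≤ K)
    (hy : Tendsto y l (𝓝 y₀)) : Tendsto (fun a => A a (y a)) l (𝓝 (B y₀)) := by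
  have hsmall : Tendsto (fun a => A a (y a - y₀)) l (𝓝 0) := by
    refine squeeze_zero_norm' ?_
      (by simpa using (tendsto_iff_norm_sub_tendsto_zero.1 hy).const_mul K)
    filter_upwards [hK] with a ha
    exact (A a).le_of_opNorm_le ha _
  simpa using hsmall.add (hA y₀)

theorem ContinuousOn.clm_apply_of_locally_bounded {α : Type*} [TopologicalSpace α] {s : Set α}
    {A : α → E →L[𝕜] F} (hA : ∀ x, ContinuousOn (fun a => A a x) s)
    (hK : ∀ a ∈ s, ∃ K, ∀ᶠ b in 𝓝[s] a, ‖A b‖ ≤ K) :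
    ContinuousOn (fun q : α × E => A q.1 q.2) (s ×ˢ univ) := by
  rintro ⟨a, x⟩ ⟨ha, -⟩
  obtain ⟨K, hK⟩ := hK a ha
  rw [ContinuousWithinAt, nhdsWithin_prod_eq, nhdsWithin_univ]
  exact Filter.Tendsto.clm_apply_of_eventually_norm_le
    (fun x => (hA x a ha).tendsto.comp tendsto_fst) (tendsto_fst.eventually hK) tendsto_snd

theorem IsCompact.exists_norm_clm_le [CompleteSpace E] {α : Type*} [TopologicalSpace α]
    {K : Set α} (hK : IsCompact K) {A : α → E →L[𝕜] F}
    (hA : ∀ x, ContinuousOn (fun a => A a x) K) : ∃ M, ∀ a ∈ K, ‖A a‖ ≤ M := by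
  obtain ⟨M, hM⟩ := banach_steinhaus (g := fun a : K => A a) fun x =>
    (hK.exists_bound_of_continuousOn (hA x)).imp fun C hC a => hC a a.2
  exact ⟨M, fun a ha => hM ⟨a, ha⟩⟩

theorem IsClosed.continuousOn_clm_apply [CompleteSpace E] {α : Type*} [PseudoMetricSpace α]
    [ProperSpace α] {s : Set α} (hs : IsClosed s) {A : α → E →L[𝕜] F}
    (hA : ∀ x, ContinuousOn (fun a => A a x) s) :
    ContinuousOn (fun q : α × E => A q.1 q.2) (s ×ˢ univ) := by
  refine ContinuousOn.clm_apply_of_locally_bounded hA fun a _ => ?_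
  have hK : IsCompact (Metric.closedBall a 1 ∩ s) := (isCompact_closedBall a 1).inter_right hs
  obtain ⟨M, hM⟩ := hK.exists_norm_clm_le fun x => (hA x).mono inter_subset_right
  exact ⟨M, mem_of_superset (inter_mem_nhdsWithin s (Metric.closedBall_mem_nhds a one_pos))
    (fun b hb => hM b ⟨hb.2, hb.1⟩)⟩

end BoundedFamilies

theorem integral_exp_neg_mul_abs {c : ℝ} (hc : 0 < c) : ∫ x : ℝ, exp (-c * |x|) = 2 / c := by
  rw [integral_comp_abs (f := fun x => exp (-c * x)), integral_exp_mul_Ioi (by linarith)]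
  field_simp
  simp

theorem integrable_exp_neg_mul_abs {c : ℝ} (hc : 0 < c) :
    Integrable fun x : ℝ => exp (-c * |x|) :=
  .of_integral_ne_zero (by rw [integral_exp_neg_mul_abs hc]; positivity)

namespace EvolutionDichotomy

variable {X : Type*} [NormedAddCommGroup X] [NormedSpace ℝ X] (E : EvolutionDichotomy X)

theorem G_apply_of_lt {t s : ℝ} (h : s < t) (x : X) : E.G t s x = E.U t s (E.P s x) := by
  simp only [G, if_pos h, ContinuousLinearMap.comp_apply, E.comm h.le]

theorem G_apply_of_le {t s : ℝ} (h : t ≤ s) (x : X) : E.G t s x = -E.V t s (x - E.P s x) := by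
  simp [G, Q, not_lt.2 h]

theorem norm_G_apply_le (t s : ℝ) (x : X) :
    ‖E.G t s x‖ ≤ E.N * exp (-E.β * |t - s|) * ‖x‖ := by
  rcases lt_or_ge s t with h | h
  · rw [E.G_apply_of_lt h, abs_of_pos (sub_pos.2 h)]
    exact E.P_decay h.le x
  · rw [E.G_apply_of_le h, norm_neg, abs_sub_comm, abs_of_nonneg (sub_nonneg.2 h)]
    exact E.Q_decay h x

theorem norm_G_le (t s : ℝ) : ‖E.G t s‖ ≤ E.N * exp (-E.β * |t - s|) :=
  ContinuousLinearMap.opNorm_le_bound _ (by positivity [E.N_pos]) (E.norm_G_apply_le t s)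

theorem norm_G_le_N (t s : ℝ) : ‖E.G t s‖ ≤ E.N :=
  (E.norm_G_le t s).trans <| mul_le_of_le_one_right E.N_pos.le <|
    exp_le_one_iff.2 (mul_nonpos_of_nonpos_of_nonneg (neg_nonpos.2 E.β_pos.le) (abs_nonneg _))

theorem norm_G_apply_le_mul (t s : ℝ) {x : X} {C : ℝ} (hx : ‖x‖ ≤ C) :
    ‖E.G t s x‖ ≤ E.N * C * exp (-E.β * |t - s|) := by
  rw [mul_right_comm]
  exact (E.norm_G_apply_le t s x).trans (by gcongr; positivity [E.N_pos])

theorem norm_integral_G_apply_le {f : ℝ → X} {C : ℝ} (hC : ∀ s, ‖f s‖ ≤ C) (t : ℝ) :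
    ‖∫ s, E.G t s (f s)‖ ≤ 2 * E.N * C / E.β := by
  calc ‖∫ s, E.G t s (f s)‖ ≤ ∫ s, E.N * C * exp (-E.β * |t - s|) :=
        norm_integral_le_of_norm_le
          (((integrable_exp_neg_mul_abs E.β_pos).comp_sub_left t).const_mul (E.N * C))
          (.of_forall fun s => E.norm_G_apply_le_mul t s (hC s))
    _ = 2 * E.N * C / E.β := by
        rw [integral_const_mul, integral_sub_left_eq_self (fun x => exp (-E.β * |x|)),
          integral_exp_neg_mul_abs E.β_pos]
        ring

theorem norm_le_of_P_eq_zero {t s : ℝ} (h : t ≤ s) {d : X} (hd : E.P t d = 0) :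
    ‖d‖ ≤ E.N * exp (-E.β * (s - t)) * ‖E.U s t d‖ := by
  have hd' : E.V t s (E.U s t d - E.P s (E.U s t d)) = d := by
    simpa [hd, E.comm h d] using E.V_left h d
  simpa [hd'] using E.Q_decay h (E.U s t d)

theorem U_V_apply {t s r : ℝ} (hts : t ≤ s) (hsr : s ≤ r) (x : X) :
    E.U r t (E.V t s (x - E.P s x)) = E.U r s (x - E.P s x) := by
  rw [← E.U_comp hts hsr, E.V_right hts]

variable [CompleteSpace X]

theorem continuousOn_U_apply :
    ContinuousOn (fun q : (ℝ × ℝ) × X => E.U q.1.1 q.1.2 q.2) ({p | p.2 ≤ p.1} ×ˢ univ) :=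
  (isClosed_le continuous_snd continuous_fst).continuousOn_clm_apply E.U_cont

theorem tendsto_U_apply {α : Type*} {l : Filter α} {φ ψ : α → ℝ} {y : α → X}
    {t₀ s₀ : ℝ} {y₀ : X} (h₀ : s₀ ≤ t₀) (hφ : Tendsto φ l (𝓝 t₀)) (hψ : Tendsto ψ l (𝓝 s₀))
    (hy : Tendsto y l (𝓝 y₀)) (hψφ : ∀ᶠ a in l, ψ a ≤ φ a) :
    Tendsto (fun a => E.U (φ a) (ψ a) (y a)) l (𝓝 (E.U t₀ s₀ y₀)) :=
  (E.continuousOn_U_apply ((t₀, s₀), y₀) ⟨h₀, mem_univ _⟩).tendsto.comp <|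
    tendsto_nhdsWithin_iff.2 ⟨(hφ.prodMk_nhds hψ).prodMk_nhds hy,
      hψφ.mono fun _ h => ⟨h, mem_univ _⟩⟩

theorem continuousOn_V_apply (x : X) :
    ContinuousOn (fun p : ℝ × ℝ => E.V p.1 p.2 (x - E.P p.2 x)) {p | p.1 ≤ p.2} := by
  rintro ⟨t₀, s₀⟩ (h₀ : t₀ ≤ s₀)
  set l := 𝓝[{p : ℝ × ℝ | p.1 ≤ p.2}] (t₀, s₀)
  set r := s₀ + 1
  set d₀ := E.V t₀ s₀ (x - E.P s₀ x)
  have hfst : Tendsto (fun p : ℝ × ℝ => p.1) l (𝓝 t₀) :=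
    (continuous_fst.tendsto _).mono_left nhdsWithin_le_nhds
  have hsnd : Tendsto (fun p : ℝ × ℝ => p.2) l (𝓝 s₀) :=
    (continuous_snd.tendsto _).mono_left nhdsWithin_le_nhds
  have hle : ∀ᶠ p in l, p.1 ≤ p.2 := eventually_mem_nhdsWithin
  have hsr : ∀ᶠ p in l, p.2 ≤ r := hsnd.eventually (eventually_le_nhds (by linarith))
  -- `V t s (x - P s x)` and `d₀ - P t d₀` both lie in `ker P t`, where `U r t` is bounded below
  have hQ : Tendsto (fun p : ℝ × ℝ => d₀ - E.P p.1 d₀) l (𝓝 d₀) := by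
    have h := (tendsto_const_nhds (x := d₀)).sub ((E.P_cont d₀).tendsto t₀ |>.comp hfst)
    rwa [show E.P t₀ d₀ = 0 from E.V_mapsTo h₀ x, sub_zero] at h
  have hU : Tendsto (fun p : ℝ × ℝ =>
      E.U r p.2 (x - E.P p.2 x) - E.U r p.1 (d₀ - E.P p.1 d₀)) l (𝓝 0) := by
    have h₁ := E.tendsto_U_apply (by linarith) tendsto_const_nhds hsnd
      ((tendsto_const_nhds (x := x)).sub ((E.P_cont x).tendsto s₀ |>.comp hsnd)) hsr
    have h₂ := E.tendsto_U_apply (by linarith) tendsto_const_nhds hfst hQ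
      (hle.and hsr |>.mono fun _ h => h.1.trans h.2)
    have h := h₁.sub h₂
    rwa [E.U_V_apply h₀ (by linarith : s₀ ≤ r) x, sub_self] at h
  have hbound : ∀ᶠ p in l, ‖E.V p.1 p.2 (x - E.P p.2 x) - (d₀ - E.P p.1 d₀)‖ ≤
      E.N * ‖E.U r p.2 (x - E.P p.2 x) - E.U r p.1 (d₀ - E.P p.1 d₀)‖ := by
    filter_upwards [hle, hsr] with p hts hsr
    have hker : E.P p.1 (E.V p.1 p.2 (x - E.P p.2 x) - (d₀ - E.P p.1 d₀)) = 0 := by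
      rw [map_sub, E.V_mapsTo hts x, map_sub, E.P_proj, sub_self, sub_zero]
    refine (E.norm_le_of_P_eq_zero (hts.trans hsr) hker).trans ?_
    rw [map_sub, E.U_V_apply hts hsr]
    gcongr
    exact mul_le_of_le_one_right E.N_pos.le
      (exp_le_one_iff.2 (by nlinarith [E.β_pos]))
  have hdiff := squeeze_zero_norm' hbound (by simpa using (hU.norm.const_mul E.N))
  have h := hdiff.add hQ
  rw [zero_add] at h
  exact h.congr fun p => sub_add_cancel _ _

theorem continuousOn_G_apply (x : X) :
    ContinuousOn (fun p : ℝ × ℝ => E.G p.1 p.2 x) {p | p.1 ≠ p.2} := by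
  have hsplit : {p : ℝ × ℝ | p.1 ≠ p.2} = {p | p.2 < p.1} ∪ {p | p.1 < p.2} := by
    ext p
    exact ne_iff_lt_or_gt.trans or_comm
  rw [hsplit]
  refine .union_of_isOpen ?_ ?_ (isOpen_lt continuous_snd continuous_fst)
    (isOpen_lt continuous_fst continuous_snd)
  · refine ContinuousOn.congr ?_ fun p hp => E.G_apply_of_lt hp x
    exact E.continuousOn_U_apply.comp (continuous_id.prodMk
      ((E.P_cont x).comp continuous_snd)).continuousOn fun p (hp : p.2 < p.1) => ⟨hp.le, mem_univ _⟩
  · exact ((E.continuousOn_V_apply x).mono fun p (hp : p.1 < p.2) => hp.le).neg.congr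
      fun p (hp : p.1 < p.2) => E.G_apply_of_le hp.le x

theorem continuousOn_G_uncurry :
    ContinuousOn (fun q : (ℝ × ℝ) × X => E.G q.1.1 q.1.2 q.2) ({p | p.1 ≠ p.2} ×ˢ univ) :=
  .clm_apply_of_locally_bounded E.continuousOn_G_apply fun _ _ =>
    ⟨E.N, .of_forall fun p => E.norm_G_le_N p.1 p.2⟩

theorem integrable_G_apply {f : ℝ → X} {C : ℝ} (hf : Continuous f) (hC : ∀ s, ‖f s‖ ≤ C) (t : ℝ) :
    Integrable fun s => E.G t s (f s) := by
  have hcont : ContinuousOn (fun s => E.G t s (f s)) {t}ᶜ :=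
    E.continuousOn_G_uncurry.comp (by fun_prop : Continuous fun s => ((t, s), f s)).continuousOn
      fun s hs => ⟨Ne.symm hs, mem_univ _⟩
  have hmeas : AEStronglyMeasurable fun s => E.G t s (f s) := by
    simpa [restrict_compl_singleton] using
      hcont.aestronglyMeasurable (μ := volume) (measurableSet_singleton t).compl
  exact .mono' (((integrable_exp_neg_mul_abs E.β_pos).comp_sub_left t).const_mul (E.N * C)) hmeas
    (.of_forall fun s => E.norm_G_apply_le_mul t s (hC s))

theorem continuous_integral_G_apply {f : ℝ → X} {C : ℝ} (hf : Continuous f) (hC : ∀ s, ‖f s‖ ≤ C) :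
    Continuous fun t => ∫ s, E.G t s (f s) := by
  -- in the variable `σ = s - t` the integrand is continuous in `t` for every `σ ≠ 0`
  have hshift : (fun t => ∫ s, E.G t s (f s)) = fun t => ∫ σ, E.G t (σ + t) (f (σ + t)) :=
    funext fun t => (integral_add_right_eq_self (fun s => E.G t s (f s)) t).symm
  rw [hshift]
  refine continuous_of_dominated (bound := fun σ => E.N * C * exp (-E.β * |σ|))
    (fun t => ((E.integrable_G_apply hf hC t).comp_add_right t).aestronglyMeasurable)
    (fun t => .of_forall fun σ => by simpa using E.norm_G_apply_le_mul t (σ + t) (hC _))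
    ((integrable_exp_neg_mul_abs E.β_pos).const_mul _) ?_
  filter_upwards [Measure.ae_ne volume 0] with σ hσ
  exact E.continuousOn_G_uncurry.comp_continuous
    (by fun_prop : Continuous fun t => ((t, σ + t), f (σ + t)))
    fun t => ⟨by simpa [eq_comm] using hσ, mem_univ _⟩

end EvolutionDichotomy

section AlmostPeriods

variable {X : Type*} [NormedAddCommGroup X]

def RelativelyDense (S : Set ℝ) : Prop :=
  ∃ l > 0, ∀ a : ℝ, ∃ T ∈ Icc a (a + l), T ∈ S

def almostPeriods (f : ℝ → X) (ε : ℝ) : Set ℝ :=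
  {T | ∀ t, ‖f (t + T) - f t‖ ≤ ε}

theorem RelativelyDense.mono {S S' : Set ℝ} (hS : RelativelyDense S) (h : S ⊆ S') :
    RelativelyDense S' :=
  let ⟨l, hl, hS⟩ := hS
  ⟨l, hl, fun a => (hS a).imp fun _ hT => ⟨hT.1, h hT.2⟩⟩

theorem AlmostPeriodic.relativelyDense_almostPeriods {f : ℝ → X} (hf : AlmostPeriodic f)
    {ε : ℝ} (hε : 0 < ε) : RelativelyDense (almostPeriods f ε) :=
  let ⟨l, hl, h⟩ := hf.2.2 ε hε
  ⟨l, hl, fun a => (h a).imp fun _ hT => ⟨hT.1, fun t => (hT.2 t).le⟩⟩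

theorem AlmostPeriodic.uniformContinuous {f : ℝ → X} (hf : AlmostPeriodic f) :
    UniformContinuous f := by
  rw [Metric.uniformContinuous_iff]
  intro ε hε
  obtain ⟨l, -, hl⟩ := hf.relativelyDense_almostPeriods (by positivity : 0 < ε / 3)
  obtain ⟨δ, hδ, hδf⟩ := Metric.uniformContinuousOn_iff.1
    (isCompact_Icc.uniformContinuousOn_of_continuous hf.1.continuousOn :
      UniformContinuousOn f (Icc (-1) (l + 1))) (ε / 3) (by positivity)
  refine ⟨min δ 1, by positivity, fun {x y} hxy => ?_⟩
  -- move `x` and `y` into `[-1, l + 1]` by a common almost period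
  obtain ⟨T, ⟨hT₁, hT₂⟩, hT⟩ := hl (-x)
  have hxy₁ : |x - y| < 1 := by rw [← Real.dist_eq]; exact hxy.trans_le (min_le_right _ _)
  have hxy₂ := abs_lt.1 hxy₁
  have hmid : dist (f (x + T)) (f (y + T)) < ε / 3 :=
    hδf _ ⟨by linarith, by linarith⟩ _ ⟨by linarith, by linarith⟩ <| by
      rw [Real.dist_eq, add_sub_add_right_eq_sub, ← Real.dist_eq]
      exact hxy.trans_le (min_le_left _ _)
  have hx := hT x
  have hy := hT y
  rw [← dist_eq_norm] at hx hy
  calc dist (f x) (f y) ≤ dist (f x) (f (x + T)) + dist (f (x + T)) (f (y + T)) +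
      dist (f (y + T)) (f y) := dist_triangle4 _ _ _ _
    _ < ε := by rw [dist_comm (f x)]; linarith

theorem AlmostPeriodic.exists_finite_translate_net {f : ℝ → X} (hf : AlmostPeriodic f) {ε : ℝ}
    (hε : 0 < ε) : ∃ F : Set ℝ, F.Finite ∧ ∀ h, ∃ c ∈ F, ∀ t, ‖f (t + h) - f (t + c)‖ ≤ ε := by
  obtain ⟨δ, hδ, hδf⟩ := Metric.uniformContinuous_iff.1 hf.uniformContinuous (ε / 2) (half_pos hε)
  obtain ⟨l, -, hl⟩ := hf.relativelyDense_almostPeriods (half_pos hε)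
  obtain ⟨F, -, hF, hcover⟩ :=
    Metric.finite_approx_of_totallyBounded (isCompact_Icc (a := 0) (b := l)).totallyBounded δ hδ
  refine ⟨F, hF, fun h => ?_⟩
  -- an almost period `T` brings `h` into `[0, l]`, which is covered by `δ`-balls around `F`
  obtain ⟨T, ⟨hT₁, hT₂⟩, hT⟩ := hl (-h)
  obtain ⟨c, hc, hhc⟩ := mem_iUnion₂.1 (hcover ⟨(by linarith : 0 ≤ h + T), by linarith⟩)
  refine ⟨c, hc, fun t => ?_⟩
  have h₁ : ‖f (t + h + T) - f (t + h)‖ ≤ ε / 2 := hT (t + h)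
  have h₂ : dist (f (t + h + T)) (f (t + c)) < ε / 2 := hδf <| by
    rw [Real.dist_eq, add_assoc, add_sub_add_left_eq_sub, ← Real.dist_eq]
    exact hhc
  rw [dist_eq_norm] at h₂
  calc ‖f (t + h) - f (t + c)‖ ≤ ‖f (t + h) - f (t + h + T)‖ + ‖f (t + h + T) - f (t + c)‖ :=
        norm_sub_le_norm_sub_add_norm_sub _ _ _
    _ ≤ ε := by rw [norm_sub_rev]; linarith

theorem RelativelyDense.sub_inter_almostPeriods {S : Set ℝ} (hS : RelativelyDense S) {f : ℝ → X}
    (hf : AlmostPeriodic f) {ε : ℝ} (hε : 0 < ε) :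
    RelativelyDense ((S - S) ∩ almostPeriods f ε) := by
  obtain ⟨F, hF, hnet⟩ := hf.exists_finite_translate_net (half_pos hε)
  have hrep : ∀ c : ℝ, ∃ r : ℝ, (∃ r' ∈ S, ∀ t, ‖f (t + r') - f (t + c)‖ ≤ ε / 2) →
      r ∈ S ∧ ∀ t, ‖f (t + r) - f (t + c)‖ ≤ ε / 2 := fun c => by
    by_cases h : ∃ r' ∈ S, ∀ t, ‖f (t + r') - f (t + c)‖ ≤ ε / 2
    · obtain ⟨r, hr⟩ := h
      exact ⟨r, fun _ => hr⟩
    · exact ⟨0, fun h' => absurd h' h⟩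
  choose rep hrep using hrep
  obtain ⟨M, hM⟩ := (hF.image fun c => |rep c|).bddAbove
  obtain ⟨c₀, hc₀, -⟩ := hnet 0
  have hM₀ : 0 ≤ M := (abs_nonneg _).trans (hM ⟨c₀, hc₀, rfl⟩)
  obtain ⟨l, hl, hSl⟩ := hS
  refine ⟨l + 2 * M, by positivity, fun a => ?_⟩
  -- `T = h - rep c`, where `h ∈ S` and its representative `rep c ∈ S` translate `f` alike
  obtain ⟨h, ⟨hh₁, hh₂⟩, hhS⟩ := hSl (a + M)
  obtain ⟨c, hc, hhc⟩ := hnet h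
  obtain ⟨hrS, hrc⟩ := hrep c ⟨h, hhS, hhc⟩
  have hr := abs_le.1 (hM ⟨c, hc, rfl⟩ : |rep c| ≤ M)
  refine ⟨h - rep c, ⟨by linarith, by linarith⟩, ⟨h, hhS, rep c, hrS, rfl⟩, fun t => ?_⟩
  have e₁ := hhc (t - rep c)
  have e₂ := hrc (t - rep c)
  rw [sub_add_cancel] at e₂
  rw [show t - rep c + h = t + (h - rep c) by ring] at e₁
  calc ‖f (t + (h - rep c)) - f t‖
      ≤ ‖f (t + (h - rep c)) - f (t - rep c + c)‖ + ‖f (t - rep c + c) - f t‖ :=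
        norm_sub_le_norm_sub_add_norm_sub _ _ _
    _ ≤ ε := by rw [norm_sub_rev (f (t - rep c + c))]; linarith

end AlmostPeriods

namespace EvolutionDichotomy

variable {X : Type*} [NormedAddCommGroup X] [NormedSpace ℝ X] (E : EvolutionDichotomy X)

def greenAlmostPeriods (η ε : ℝ) : Set ℝ :=
  {T | ∀ t s, η ≤ |t - s| → ‖E.G (t + T) (s + T) - E.G t s‖ ≤ ε}

theorem ExpAP.relativelyDense_greenAlmostPeriods {E : EvolutionDichotomy X} (hE : E.ExpAP)
    {η ε : ℝ} (hη : 0 < η) (hε : 0 < ε) : RelativelyDense (E.greenAlmostPeriods η ε) := by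
  obtain ⟨γ, hγ, l, hl, h⟩ := hE η hη ε hε
  refine ⟨l, hl, fun a => (h a).imp fun T hT => ⟨hT.1, fun t s hts => (hT.2 t s hts).trans ?_⟩⟩
  exact mul_le_of_le_one_right hε.le (exp_le_one_iff.2 (by nlinarith [abs_nonneg (t - s)]))

theorem sub_mem_greenAlmostPeriods {η ε T T' : ℝ} (hT : T ∈ E.greenAlmostPeriods η ε)
    (hT' : T' ∈ E.greenAlmostPeriods η ε) : T - T' ∈ E.greenAlmostPeriods η (2 * ε) := by
  intro t s hts
  have hts' : η ≤ |t - T' - (s - T')| := by rwa [sub_sub_sub_cancel_right]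
  have h₁ := hT _ _ hts'
  have h₂ := hT' _ _ hts'
  rw [sub_add_cancel, sub_add_cancel] at h₂
  rw [show t - T' + T = t + (T - T') by ring, show s - T' + T = s + (T - T') by ring] at h₁
  calc ‖E.G (t + (T - T')) (s + (T - T')) - E.G t s‖
      ≤ ‖E.G (t + (T - T')) (s + (T - T')) - E.G (t - T') (s - T')‖ +
        ‖E.G (t - T') (s - T') - E.G t s‖ := norm_sub_le_norm_sub_add_norm_sub _ _ _
    _ ≤ 2 * ε := by rw [norm_sub_rev (E.G (t - T') (s - T'))]; linarith

theorem ExpAP.relativelyDense_almostPeriods_inter_greenAlmostPeriods {E : EvolutionDichotomy X}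
    (hE : E.ExpAP) {f : ℝ → X} (hf : AlmostPeriodic f) {η ε : ℝ} (hη : 0 < η) (hε : 0 < ε) :
    RelativelyDense (almostPeriods f ε ∩ E.greenAlmostPeriods η ε) := by
  refine ((hE.relativelyDense_greenAlmostPeriods hη (half_pos hε)).sub_inter_almostPeriods hf
    hε).mono ?_
  rintro _ ⟨⟨T, hT, T', hT', rfl⟩, hTf⟩
  refine ⟨hTf, ?_⟩
  simpa [mul_div_cancel₀] using E.sub_mem_greenAlmostPeriods hT hT'

theorem norm_G_translate_sub_le {η δ T : ℝ} (hTG : T ∈ E.greenAlmostPeriods η δ) (hδ : 0 ≤ δ)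
    (t s : ℝ) :
    ‖E.G (t + T) (s + T) - E.G t s‖ ≤ (Icc (t - η) (t + η)).indicator (fun _ => 2 * E.N) s +
      √(2 * E.N * δ) * exp (-(E.β / 2) * |t - s|) := by
  have hdecay : ‖E.G (t + T) (s + T) - E.G t s‖ ≤ 2 * E.N * exp (-E.β * |t - s|) := by
    have h := E.norm_G_le (t + T) (s + T)
    rw [add_sub_add_right_eq_sub] at h
    linarith [norm_sub_le (E.G (t + T) (s + T)) (E.G t s), E.norm_G_le t s]
  have hsqrt : 0 ≤ √(2 * E.N * δ) * exp (-(E.β / 2) * |t - s|) := by positivity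
  by_cases hs : s ∈ Icc (t - η) (t + η)
  · rw [indicator_of_mem hs]
    have h := mul_le_of_le_one_right (by linarith [E.N_pos] : 0 ≤ 2 * E.N)
      (exp_le_one_iff.2 (by nlinarith [E.β_pos, abs_nonneg (t - s)]) :
        exp (-E.β * |t - s|) ≤ 1)
    linarith
  · rw [indicator_of_notMem hs, zero_add]
    have hη : η ≤ |t - s| := by
      rw [mem_Icc, not_and_or, not_le, not_le] at hs
      rcases hs with hs | hs
      · linarith [le_abs_self (t - s)]
      · linarith [neg_le_abs (t - s)]
    -- the geometric mean of the bounds `δ` and `2N e^{-β|t-s|}` decays at half the rate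
    rw [← pow_le_pow_iff_left₀ (norm_nonneg _) hsqrt two_ne_zero, mul_pow,
      sq_sqrt (by positivity [E.N_pos]), sq (exp _), ← exp_add]
    calc ‖E.G (t + T) (s + T) - E.G t s‖ ^ 2 ≤ δ * (2 * E.N * exp (-E.β * |t - s|)) := by
          rw [sq]; exact mul_le_mul (hTG t s hη) hdecay (norm_nonneg _) hδ
      _ = 2 * E.N * δ * exp (-(E.β / 2) * |t - s| + -(E.β / 2) * |t - s|) := by ring_nf

theorem norm_G_translate_apply_sub_le {f : ℝ → X} {C η δ T : ℝ} (hC : ∀ s, ‖f s‖ ≤ C)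
    (hTf : T ∈ almostPeriods f δ) (hTG : T ∈ E.greenAlmostPeriods η δ) (t s : ℝ) :
    ‖E.G (t + T) (s + T) (f (s + T)) - E.G t s (f s)‖ ≤
      (Icc (t - η) (t + η)).indicator (fun _ => 2 * E.N * C) s +
        (E.N * δ + C * √(2 * E.N * δ)) * exp (-(E.β / 2) * |t - s|) := by
  have hδ : 0 ≤ δ := (norm_nonneg _).trans (hTf 0)
  have hf : ‖E.G (t + T) (s + T) (f (s + T) - f s)‖ ≤ E.N * δ * exp (-(E.β / 2) * |t - s|) := by
    refine (E.norm_G_apply_le_mul _ _ (hTf s)).trans ?_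
    rw [add_sub_add_right_eq_sub]
    gcongr
    · positivity [E.N_pos]
    · nlinarith [E.β_pos, abs_nonneg (t - s)]
  have hG : ‖(E.G (t + T) (s + T) - E.G t s) (f s)‖ ≤
      ((Icc (t - η) (t + η)).indicator (fun _ => 2 * E.N) s +
        √(2 * E.N * δ) * exp (-(E.β / 2) * |t - s|)) * C :=
    ((E.G (t + T) (s + T) - E.G t s).le_opNorm (f s)).trans <|
      mul_le_mul (E.norm_G_translate_sub_le hTG hδ t s) (hC s) (norm_nonneg _)
        ((norm_nonneg _).trans (E.norm_G_translate_sub_le hTG hδ t s))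
  calc ‖E.G (t + T) (s + T) (f (s + T)) - E.G t s (f s)‖
      = ‖E.G (t + T) (s + T) (f (s + T) - f s) + (E.G (t + T) (s + T) - E.G t s) (f s)‖ := by
        rw [map_sub, sub_apply]; abel_nf
    _ ≤ _ := norm_add_le_of_le hf hG
    _ = _ := by rw [indicator_mul_const _ (fun _ => 2 * E.N) C]; ring

variable [CompleteSpace X]

theorem norm_integral_G_translate_sub_le {f : ℝ → X} {C η δ T : ℝ} (hf : Continuous f)
    (hC : ∀ s, ‖f s‖ ≤ C) (hη : 0 ≤ η) (hTf : T ∈ almostPeriods f δ)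
    (hTG : T ∈ E.greenAlmostPeriods η δ) (t : ℝ) :
    ‖(∫ s, E.G (t + T) s (f s)) - ∫ s, E.G t s (f s)‖ ≤
      4 * E.N * C * η + 4 * (E.N * δ + C * √(2 * E.N * δ)) / E.β := by
  rw [← integral_add_right_eq_self (fun s => E.G (t + T) s (f s)) T,
    ← integral_sub ((E.integrable_G_apply hf hC _).comp_add_right T) (E.integrable_G_apply hf hC t)]
  have hexp := (integrable_exp_neg_mul_abs (half_pos E.β_pos)).comp_sub_left t
  have hind : Integrable ((Icc (t - η) (t + η)).indicator fun _ => 2 * E.N * C) :=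
    (integrable_indicator_iff measurableSet_Icc).2 (integrableOn_const measure_Icc_lt_top.ne)
  refine (norm_integral_le_of_norm_le (hind.add (hexp.const_mul _))
    (.of_forall (E.norm_G_translate_apply_sub_le hC hTf hTG t))).trans_eq ?_
  rw [integral_add' hind (hexp.const_mul _), integral_indicator_const _ measurableSet_Icc,
    Real.volume_real_Icc, integral_const_mul,
    integral_sub_left_eq_self (fun x => exp (-(E.β / 2) * |x|)),
    integral_exp_neg_mul_abs (half_pos E.β_pos), max_eq_left (by linarith), smul_eq_mul]
  field_simp
  ring

end EvolutionDichotomy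

/-- if the Green function is exponentially almost periodic and `f` is
almost periodic, then `u(t) = ∫_ℝ G(t,s) f(s) ds` is almost periodic. -/
theorem green_convolution_almost_periodic
    {X : Type*} [NormedAddCommGroup X] [NormedSpace ℝ X] [CompleteSpace X]
    (E : EvolutionDichotomy X) (hE : E.ExpAP)
    (f : ℝ → X) (hf : AlmostPeriodic f) :
    AlmostPeriodic (fun t : ℝ => ∫ s : ℝ, E.G t s (f s)) := by
  obtain ⟨C, hC⟩ : ∃ C, ∀ s, ‖f s‖ ≤ C :=
    (isBounded_iff_forall_norm_le.1 hf.2.1).imp fun C hC s => hC _ (mem_range_self s)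
  refine ⟨E.continuous_integral_G_apply hf.1 hC, isBounded_iff_forall_norm_le.2
    ⟨_, forall_mem_range.2 (E.norm_integral_G_apply_le hC)⟩, fun ε hε => ?_⟩
  have hlim : Tendsto (fun δ => 4 * E.N * C * δ + 4 * (E.N * δ + C * √(2 * E.N * δ)) / E.β)
      (𝓝[>] 0) (𝓝 0) := by
    have hcont : Continuous fun δ =>
        4 * E.N * C * δ + 4 * (E.N * δ + C * √(2 * E.N * δ)) / E.β := by
      fun_prop
    simpa using (hcont.tendsto 0).mono_left nhdsWithin_le_nhds
  obtain ⟨δ, hδε, hδ⟩ := ((hlim.eventually (gt_mem_nhds hε)).and self_mem_nhdsWithin).exists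
  obtain ⟨l, hl, hT⟩ := hE.relativelyDense_almostPeriods_inter_greenAlmostPeriods hf hδ hδ
  exact ⟨l, hl, fun a => (hT a).imp fun T ⟨hTa, hTf, hTG⟩ => ⟨hTa, fun t =>
    (E.norm_integral_G_translate_sub_le hf.1 hC hδ.le hTf hTG t).trans_lt hδε⟩⟩
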